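/- arXiv:2304.04930 — 3 statements merged into one kernel-verified Lean document; each statement's English description precedes it below -/
import Mathlib

section
/- Let x, y ∈ R^n with x ≠ y, and let π_x(z) = (z−x)/‖z−x‖ be the radial projection onto the unit sphere centered at x. Let H ⊂ R^n be a hyperplane through y with unit normal ν. Then the Jacobian determinant of the restriction of the derivative D_y π_x to H equals |⟨x−y, ν⟩| / ‖x−y‖^n. -/
open Metric Set ContinuousLinearMap
open scoped RealInnerProductSpace

/-! With `r = ‖y - x‖`, the derivative of `z ↦ ‖z - x‖⁻¹ • (z - x)` at `y` is `r⁻¹ • P`, where `P` is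
the orthogonal projection onto `(y - x)ᗮ`. Since `P` is a self-adjoint idempotent, for `a, b ∈ H`
we get `⟪P a, P b⟫ = ⟪a, b⟫ - ⟪v, a⟫ ⟪v, b⟫ / ‖v‖²` with `v = y - x`, and on `H` the functional
`⟪v, ·⟫` is `⟪p, ·⟫` for the projection `p` of `v` onto `H`. Hence `L* L = r⁻² (1 - p ⊗ p / ‖v‖²)`,
a rank-one perturbation of a multiple of the identity, with determinant
`r^(-2(n-1)) (1 - ‖p‖² / ‖v‖²) = r^(-2(n-1)) ⟪v, ν⟫² / r²` by Pythagoras. -/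

theorem LinearMap.det_id_sub_smulRight {K E : Type*} [Field K] [AddCommGroup E] [Module K E]
    [FiniteDimensional K E] (f : E →ₗ[K] K) (v : E) :
    LinearMap.det (LinearMap.id - f.smulRight v) = 1 - f v := by
  set b := Module.finBasis K E
  have hmatrix : LinearMap.toMatrix b b (f.smulRight v) =
      Matrix.replicateCol Unit (b.repr v) * Matrix.replicateRow Unit (f ∘ b) := by
    ext i j
    simp [LinearMap.toMatrix_apply, Matrix.mul_apply, mul_comm]
  rw [← LinearMap.det_toMatrix b, map_sub, LinearMap.toMatrix_id, hmatrix,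
    Matrix.det_one_sub_mul_comm, Matrix.det_unique, Matrix.sub_apply, Matrix.one_apply_eq,
    Matrix.replicateRow_mul_replicateCol_apply]
  congr 1
  conv_rhs => rw [← b.sum_repr v, map_sum]
  simp [dotProduct, mul_comm]

section Calculus

variable {F : Type*} [NormedAddCommGroup F] [InnerProductSpace ℝ F]

theorem hasFDerivAt_norm {x : F} (hx : x ≠ 0) :
    HasFDerivAt (‖·‖) (‖x‖⁻¹ • innerSL ℝ x) x := by
  have hsqrt : (‖·‖) = Real.sqrt ∘ fun z : F => ‖z‖ ^ 2 := by
    ext z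
    exact (Real.sqrt_sq (norm_nonneg z)).symm
  rw [hsqrt]
  refine ((Real.hasDerivAt_sqrt (by positivity)).comp_hasFDerivAt x
    (hasStrictFDerivAt_norm_sq x).hasFDerivAt).congr_fderiv ?_
  rw [Real.sqrt_sq (norm_nonneg x), ← Nat.cast_smul_eq_nsmul ℝ, smul_smul, Nat.cast_ofNat]
  congr 1
  field_simp

theorem hasFDerivAt_norm_inv_smul {x : F} (hx : x ≠ 0) :
    HasFDerivAt (fun z : F => ‖z‖⁻¹ • z) (‖x‖⁻¹ • (ℝ ∙ x)ᗮ.starProjection) x := by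
  have hnorm : ‖x‖ ≠ 0 := norm_ne_zero_iff.2 hx
  refine (((hasDerivAt_inv hnorm).comp_hasFDerivAt x (hasFDerivAt_norm hx)).smul
    (hasFDerivAt_id x)).congr_fderiv ?_
  ext v
  simp only [Function.comp_apply, add_apply, smul_apply, id_apply, smulRight_apply,
    innerSL_apply_apply, smul_eq_mul, Submodule.starProjection_orthogonal_val,
    Submodule.starProjection_singleton, RCLike.ofReal_real_eq_id, id]
  match_scalars <;> field_simp

end Calculus

theorem det_adjoint_comp_self_smul {F G : Type*} [NormedAddCommGroup F] [InnerProductSpace ℝ F]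
    [FiniteDimensional ℝ F] [NormedAddCommGroup G] [InnerProductSpace ℝ G] [FiniteDimensional ℝ G]
    (c : ℝ) (T : F →L[ℝ] G) :
    LinearMap.det (adjoint (c • T) ∘L (c • T) : F →ₗ[ℝ] F) =
      (c ^ 2) ^ Module.finrank ℝ F * LinearMap.det (adjoint T ∘L T : F →ₗ[ℝ] F) := by
  have hscale : adjoint (c • T) ∘L (c • T) = c ^ 2 • (adjoint T ∘L T) := by
    rw [map_smulₛₗ, smul_comp, comp_smul, smul_smul, RCLike.conj_to_real, sq]
  rw [hscale, toLinearMap_smul, LinearMap.det_smul]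

section Gram

variable {E : Type*} [NormedAddCommGroup E] [InnerProductSpace ℝ E] [FiniteDimensional ℝ E]

theorem adjoint_comp_self_starProjection_comp_subtypeL (K : Submodule ℝ E) (v : E) :
    adjoint ((ℝ ∙ v)ᗮ.starProjection ∘L K.subtypeL) ∘L ((ℝ ∙ v)ᗮ.starProjection ∘L K.subtypeL) =
      ContinuousLinearMap.id ℝ K - ((‖v‖ ^ 2)⁻¹ • innerSL ℝ (K.orthogonalProjectionOnto v)).smulRight
        (K.orthogonalProjectionOnto v) := by
  ext1 a
  refine ext_inner_right ℝ fun b => ?_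
  have hproj : ⟪(ℝ ∙ v)ᗮ.starProjection a, (ℝ ∙ v)ᗮ.starProjection b⟫ =
      ⟪(a : E), b⟫ - (‖v‖ ^ 2)⁻¹ * ⟪v, a⟫ * ⟪v, b⟫ := by
    rw [Submodule.inner_starProjection_left_eq_right, ← mul_apply_eq_comp,
      (Submodule.isIdempotentElem_starProjection _).eq, Submodule.starProjection_orthogonal_val,
      Submodule.starProjection_singleton, inner_sub_right, real_inner_smul_right, real_inner_comm v,
      RCLike.ofReal_real_eq_id, id]
    ring
  rw [comp_apply, adjoint_inner_left, comp_apply, comp_apply, Submodule.subtypeL_apply,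
    Submodule.subtypeL_apply, hproj, sub_apply, inner_sub_left, smulRight_apply, id_apply,
    real_inner_smul_left, smul_apply, innerSL_apply_apply, smul_eq_mul,
    Submodule.inner_orthogonalProjectionOnto_eq_of_mem_right,
    Submodule.inner_orthogonalProjectionOnto_eq_of_mem_right, Submodule.coe_inner]

theorem det_adjoint_comp_self_starProjection_comp_subtypeL (K : Submodule ℝ E) {v : E}
    (hv : v ≠ 0) :
    LinearMap.det (adjoint ((ℝ ∙ v)ᗮ.starProjection ∘L K.subtypeL) ∘L
      ((ℝ ∙ v)ᗮ.starProjection ∘L K.subtypeL) : K →ₗ[ℝ] K) = ‖Kᗮ.starProjection v‖ ^ 2 / ‖v‖ ^ 2 := by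
  rw [adjoint_comp_self_starProjection_comp_subtypeL, toLinearMap_sub, coe_id]
  refine (LinearMap.det_id_sub_smulRight _ _).trans ?_
  have hv' : ‖v‖ ^ 2 ≠ 0 := by positivity
  have hpyth := K.norm_sq_eq_add_norm_sq_projection v
  rw [coe_coe, smul_apply, innerSL_apply_apply, real_inner_self_eq_norm_sq, smul_eq_mul,
    Submodule.starProjection_apply, ← Submodule.coe_norm, eq_div_iff hv', sub_mul, one_mul, mul_comm, mul_inv_cancel_left₀ hv']
  linarith

end Gram

/-- Let `x ≠ y` in `ℝⁿ` and `π_x(z) = (z - x)/‖z - x‖` the radial projection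
onto the unit sphere centered at `x`.  Let `H` be the hyperplane through `y` with unit
normal `ν` (whose direction space is the orthogonal complement of `span ν`).  Then the
Jacobian determinant `√(det (L* ∘ L))` of the restriction `L` of the derivative
`D_y π_x` to `H` equals `|⟪x - y, ν⟫| / ‖x - y‖ ^ n`. -/
theorem stmt_1 (n : ℕ) (x y : EuclideanSpace ℝ (Fin n)) (hxy : x ≠ y)
    (ν : EuclideanSpace ℝ (Fin n)) (hν : ‖ν‖ = 1) :
    let H : Submodule ℝ (EuclideanSpace ℝ (Fin n)) := (ℝ ∙ ν)ᗮ
    let L : H →L[ℝ] EuclideanSpace ℝ (Fin n) :=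
      (fderiv ℝ (fun z : EuclideanSpace ℝ (Fin n) => ‖z - x‖⁻¹ • (z - x)) y).comp H.subtypeL
    Real.sqrt (LinearMap.det (((ContinuousLinearMap.adjoint L).comp L).toLinearMap)) =
      |⟪x - y, ν⟫| / ‖x - y‖ ^ n := by
  intro H L
  obtain _ | m := n
  · exact absurd (Subsingleton.elim x y) hxy
  have hyx : y - x ≠ 0 := sub_ne_zero.2 hxy.symm
  have hL : L = ‖y - x‖⁻¹ • ((ℝ ∙ (y - x))ᗮ.starProjection ∘L H.subtypeL) := by
    rw [← smul_comp, ← (hasFDerivAt_norm_inv_smul hyx).fderiv,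
      ← fderiv_comp_sub (f := fun w : EuclideanSpace ℝ (Fin (m + 1)) => ‖w‖⁻¹ • w)]
  have hfinrank : Module.finrank ℝ H = m := by
    have : Fact (Module.finrank ℝ (EuclideanSpace ℝ (Fin (m + 1))) = m + 1) :=
      ⟨finrank_euclideanSpace_fin⟩
    exact Submodule.finrank_orthogonal_span_singleton (by rintro rfl; simp at hν)
  have hnormalPart : ‖Hᗮ.starProjection (y - x)‖ = |⟪x - y, ν⟫| := by
    rw [Submodule.starProjection_orthogonal_val, Submodule.starProjection_orthogonal_val,
      sub_sub_cancel, Submodule.starProjection_unit_singleton ℝ hν, norm_smul,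
      hν, mul_one, Real.norm_eq_abs, real_inner_comm, ← neg_sub, inner_neg_left, abs_neg]
  rw [hL, det_adjoint_comp_self_smul, det_adjoint_comp_self_starProjection_comp_subtypeL H hyx,
    hfinrank, hnormalPart, norm_sub_rev y x,
    ← Real.sqrt_sq (by positivity : 0 ≤ |⟪x - y, ν⟫| / ‖x - y‖ ^ (m + 1))]
  congr 1
  ring
end

section
/- Let A : R^n → R^n be the linear map A(u) = (u − ⟨w, u⟩w)/λ restricted to an (n−1)-dimensional subspace H, where w is a unit vector not orthogonal to H and λ > 0. Then the singular values of A|_H consist of 1/λ with multiplicity n−2 and |⟨w, ν⟩|/λ with multiplicity 1, where ν is a unit normal to H. In particular, the Jacobian determinant of A|_H equals |⟨w, ν⟩|/λ^{n−1}. -/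
open ContinuousLinearMap
open scoped RealInnerProductSpace

/-! For `x ∈ H` one has `⟪w, x⟫ = ⟪v, x⟫`, where `v` is the orthogonal projection of `w` onto `H`,
so `L* L = λ⁻² (id - v ⊗ v)` on `H`. In an orthonormal basis of `H` whose first vector is
parallel to `v` this operator is diagonal, with entries `λ⁻²` and `λ⁻² (1 - ‖v‖²)`, and
`1 - ‖v‖² = ⟪w, ν⟫²` by Pythagoras in `H ⊕ ℝ ν`. -/

theorem Module.Basis.det_eq_prod_of_apply_eq_smul {R M ι : Type*} [CommRing R] [AddCommGroup M]
    [Module R M] [Fintype ι] [DecidableEq ι] (b : Module.Basis ι R M) {f : M →ₗ[R] M}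
    {d : ι → R} (h : ∀ i, f (b i) = d i • b i) : LinearMap.det f = ∏ i, d i := by
  have : f = Matrix.toLin b b (Matrix.diagonal d) :=
    b.ext fun i => by simp [Matrix.toLin_self, h, Matrix.diagonal_apply]
  rw [this, LinearMap.det_toLin, Matrix.det_diagonal]

theorem Multiset.map_univ_update_const {ι α : Type*} [Fintype ι] [DecidableEq ι] (i₀ : ι)
    (a b : α) :
    Multiset.map (Function.update (fun _ => a) i₀ b) Finset.univ.val =
      Multiset.replicate (Fintype.card ι - 1) a + {b} := by
  have hmem : i₀ ∈ Finset.univ.val := Finset.mem_val.mpr (Finset.mem_univ i₀)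
  have herase : Multiset.map (Function.update (fun _ => a) i₀ b) (Finset.univ.val.erase i₀) =
      Multiset.replicate (Fintype.card ι - 1) a := by
    rw [Multiset.eq_replicate, Multiset.card_map, Multiset.card_erase_of_mem hmem]
    refine ⟨rfl, fun x hx => ?_⟩
    obtain ⟨i, hi, rfl⟩ := Multiset.mem_map.mp hx
    exact Function.update_of_ne (Finset.univ.nodup.mem_erase_iff.mp hi).1 _ _
  conv_lhs => rw [← Multiset.cons_erase hmem, Multiset.map_cons, herase, Function.update_self]
  rw [add_comm, Multiset.singleton_add]

theorem Finset.prod_univ_update_const {ι M : Type*} [Fintype ι] [DecidableEq ι] [CommMonoid M]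
    (i₀ : ι) (a b : M) :
    ∏ i, Function.update (fun _ => a) i₀ b i = a ^ (Fintype.card ι - 1) * b := by
  rw [Finset.prod_eq_multiset_prod, Multiset.map_univ_update_const, Multiset.prod_add,
    Multiset.prod_replicate, Multiset.prod_singleton]

section
variable {F : Type*} [NormedAddCommGroup F] [InnerProductSpace ℝ F]

theorem exists_norm_eq_one_and_eq_norm_smul [Nontrivial F] (v : F) :
    ∃ e : F, ‖e‖ = 1 ∧ v = ‖v‖ • e := by
  rcases eq_or_ne v 0 with rfl | hv
  · obtain ⟨e, he⟩ := exists_norm_eq F zero_le_one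
    exact ⟨e, he, by simp⟩
  · exact ⟨‖v‖⁻¹ • v, norm_smul_inv_norm hv, by
      rw [smul_smul, mul_inv_cancel₀ (norm_ne_zero_iff.mpr hv), one_smul]⟩

theorem norm_sq_orthogonalProjectionOnto_orthogonal_span_singleton [CompleteSpace F]
    {ν : F} (hν : ‖ν‖ = 1) (w : F) :
    ‖(ℝ ∙ ν)ᗮ.orthogonalProjectionOnto w‖ ^ 2 = ‖w‖ ^ 2 - ⟪ν, w⟫ ^ 2 := by
  have := (ℝ ∙ ν).norm_sq_eq_add_norm_sq_starProjection w
  rw [Submodule.starProjection_unit_singleton ℝ hν, norm_smul, hν, mul_one, Real.norm_eq_abs,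
    sq_abs] at this
  change ‖(ℝ ∙ ν)ᗮ.starProjection w‖ ^ 2 = _
  linarith

theorem exists_orthonormalBasis_apply_eq {ι : Type*} [Fintype ι] [FiniteDimensional ℝ F]
    (hcard : Module.finrank ℝ F = Fintype.card ι) (i₀ : ι) {e : F} (he : ‖e‖ = 1) :
    ∃ b : OrthonormalBasis ι ℝ F, b i₀ = e := by
  have hon : Orthonormal ℝ (({i₀} : Set ι).domRestrict fun _ => e) :=
    ⟨fun _ => he, fun i j hij => absurd (Subtype.ext (i.2.trans j.2.symm)) hij⟩
  obtain ⟨b, hb⟩ := hon.exists_orthonormalBasis_extension_of_card_eq hcard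
  exact ⟨b, hb i₀ rfl⟩

theorem exists_orthonormalBasis_eigen_of_apply_eq_smul_sub_inner_smul {ι : Type*} [Fintype ι]
    [FiniteDimensional ℝ F] (hcard : Module.finrank ℝ F = Fintype.card ι) (i₀ : ι)
    {T : F → F} {a : ℝ} {v : F} (hT : ∀ x, T x = a • (x - ⟪v, x⟫ • v)) :
    ∃ b : OrthonormalBasis ι ℝ F,
      T (b i₀) = (a * (1 - ‖v‖ ^ 2)) • b i₀ ∧ ∀ i ≠ i₀, T (b i) = a • b i := by
  have : Nontrivial F :=
    Module.nontrivial_of_finrank_pos (hcard ▸ Fintype.card_pos_iff.mpr ⟨i₀⟩)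
  obtain ⟨e, he, hve⟩ := exists_norm_eq_one_and_eq_norm_smul v
  obtain ⟨b, hb⟩ := exists_orthonormalBasis_apply_eq hcard i₀ he
  refine ⟨b, ?_, fun i hi => ?_⟩
  · have hve' : ⟪v, e⟫ = ‖v‖ := by
      conv_lhs => rw [hve]
      rw [real_inner_smul_left, real_inner_self_eq_norm_sq, he, one_pow, mul_one]
    rw [hT, hb, hve']
    nth_rw 2 [hve]
    match_scalars
    ring
  · have hei : ⟪e, b i⟫ = 0 := hb ▸ b.orthonormal.2 hi.symm
    rw [hT, hve, real_inner_smul_left, hei, mul_zero, zero_smul, sub_zero]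

theorem adjoint_comp_subtypeL_comp_self_apply [CompleteSpace F] {K : Submodule ℝ F}
    [CompleteSpace K] {w : F} (hw : ‖w‖ = 1) {lam : ℝ} {A : F →L[ℝ] F}
    (hA : ∀ u, A u = lam⁻¹ • (u - ⟪w, u⟫ • w)) (x : K) :
    adjoint (A.comp K.subtypeL) (A.comp K.subtypeL x) =
      (lam⁻¹ ^ 2) • (x - ⟪K.orthogonalProjectionOnto w, x⟫ • K.orthogonalProjectionOnto w) := by
  refine ext_inner_right ℝ fun y => ?_
  rw [adjoint_inner_left, real_inner_smul_left, inner_sub_left, real_inner_smul_left,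
    Submodule.inner_orthogonalProjectionOnto_eq_of_mem_right,
    Submodule.inner_orthogonalProjectionOnto_eq_of_mem_right]
  simp only [comp_apply, Submodule.subtypeL_apply, hA, real_inner_smul_left,
    real_inner_smul_right, inner_sub_left, inner_sub_right, Submodule.coe_inner,
    real_inner_self_eq_norm_sq, hw, real_inner_comm w]
  ring

end

theorem stmt_3_general (n : ℕ) (hn : 2 ≤ n) (w ν : EuclideanSpace ℝ (Fin n))
    (hw : ‖w‖ = 1) (hν : ‖ν‖ = 1) (lam : ℝ) (hlam : 0 < lam)
    (A : EuclideanSpace ℝ (Fin n) →L[ℝ] EuclideanSpace ℝ (Fin n))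
    (hA : ∀ u, A u = lam⁻¹ • (u - ⟪w, u⟫ • w)) :
    let H : Submodule ℝ (EuclideanSpace ℝ (Fin n)) := (ℝ ∙ ν)ᗮ
    let L : H →L[ℝ] EuclideanSpace ℝ (Fin n) := A.comp H.subtypeL
    (∃ (b : OrthonormalBasis (Fin (n - 1)) ℝ H) (σ : Fin (n - 1) → ℝ),
        (∀ i, (ContinuousLinearMap.adjoint L).comp L (b i) = (σ i ^ 2) • (b i)) ∧
        Multiset.map σ Finset.univ.val =
          Multiset.replicate (n - 2) (1 / lam) + {|⟪w, ν⟫| / lam}) ∧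
      Real.sqrt (LinearMap.det (((ContinuousLinearMap.adjoint L).comp L).toLinearMap)) =
        |⟪w, ν⟫| / lam ^ (n - 1) := by
  intro H L
  have : Fact (Module.finrank ℝ (EuclideanSpace ℝ (Fin n)) = n - 1 + 1) :=
    ⟨by rw [finrank_euclideanSpace_fin]; omega⟩
  have hdim : Module.finrank ℝ H = Fintype.card (Fin (n - 1)) := by
    simpa using Submodule.finrank_orthogonal_span_singleton
      (norm_ne_zero_iff.mp (hν.trans_ne one_ne_zero))
  let j₀ : Fin (n - 1) := ⟨0, by omega⟩
  obtain ⟨b, hb₀, hb⟩ := exists_orthonormalBasis_eigen_of_apply_eq_smul_sub_inner_smul hdim j₀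
    (adjoint_comp_subtypeL_comp_self_apply hw hA)
  have hv := norm_sq_orthogonalProjectionOnto_orthogonal_span_singleton hν w
  let σ := Function.update (fun _ => 1 / lam) j₀ (|⟪w, ν⟫| / lam)
  have heig : ∀ i, (adjoint L).comp L (b i) = (σ i ^ 2) • b i := by
    intro i
    rcases eq_or_ne i j₀ with rfl | hi
    · rw [comp_apply, hb₀, hv, hw, real_inner_comm]
      simp only [σ, Function.update_self, div_pow, sq_abs]
      congr 1
      ring
    · rw [comp_apply, hb i hi]
      simp only [σ, Function.update_of_ne hi, one_div, inv_pow]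
  have hσ : Multiset.map σ Finset.univ.val =
      Multiset.replicate (n - 2) (1 / lam) + {|⟪w, ν⟫| / lam} := by
    rw [Multiset.map_univ_update_const, Fintype.card_fin, Nat.sub_sub]
  refine ⟨⟨b, σ, heig, hσ⟩, ?_⟩
  rw [b.toBasis.det_eq_prod_of_apply_eq_smul (by simpa using heig), Finset.prod_pow,
    Finset.prod_univ_update_const, Real.sqrt_sq (by positivity), Fintype.card_fin, div_pow,
    one_pow, div_mul_div_comm, one_mul, ← pow_succ, (by omega : n - 1 - 1 + 1 = n - 1)]

/-- Let `A u = (u - ⟪w, u⟫ • w)/λ` with `w` a unit vector and `λ > 0`, and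
let `H = (span ν)ᗮ` be a hyperplane through the origin with unit normal `ν`, with `w` not
orthogonal to `H`.  Then the singular values of `A|_H` (the eigenvalues of
`(A|_H)* ∘ (A|_H)` are their squares) consist of `1/λ` with multiplicity `n - 2` and
`|⟪w, ν⟫|/λ` with multiplicity `1`; in particular the Jacobian determinant
`√(det (L* ∘ L))` of `L = A|_H` equals `|⟪w, ν⟫| / λ ^ (n - 1)`. -/
theorem stmt_3 (n : ℕ) (hn : 2 ≤ n) (w ν : EuclideanSpace ℝ (Fin n))
    (hw : ‖w‖ = 1) (hν : ‖ν‖ = 1) (lam : ℝ) (hlam : 0 < lam)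
    (A : EuclideanSpace ℝ (Fin n) →L[ℝ] EuclideanSpace ℝ (Fin n))
    (hA : ∀ u, A u = lam⁻¹ • (u - ⟪w, u⟫ • w))
    (hworth : w ∉ ((ℝ ∙ ν)ᗮ)ᗮ) :
    let H : Submodule ℝ (EuclideanSpace ℝ (Fin n)) := (ℝ ∙ ν)ᗮ
    let L : H →L[ℝ] EuclideanSpace ℝ (Fin n) := A.comp H.subtypeL
    (∃ (b : OrthonormalBasis (Fin (n - 1)) ℝ H) (σ : Fin (n - 1) → ℝ),
        (∀ i, (ContinuousLinearMap.adjoint L).comp L (b i) = (σ i ^ 2) • (b i)) ∧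
        Multiset.map σ Finset.univ.val =
          Multiset.replicate (n - 2) (1 / lam) + {|⟪w, ν⟫| / lam}) ∧
      Real.sqrt (LinearMap.det (((ContinuousLinearMap.adjoint L).comp L).toLinearMap)) =
        |⟪w, ν⟫| / lam ^ (n - 1) :=
  stmt_3_general n hn w ν hw hν lam hlam A hA
end

section
/- Let E ⊂ R^n be a bounded open set with C^1 boundary, x ∈ ∂E, and ω ∈ S^{n-1} a direction such that the line L_{x,ω} = x + Rω intersects ∂E transversally (i.e., ⟨ω, ν(y)⟩ ≠ 0 for every y ∈ ∂E ∩ L_{x,ω}) in finitely many points. Then the number of intersection points is even, and enumerating them as y_1, ..., y_k along the line, the signs of ⟨ω, ν(y_i)⟩ alternate, with ⟨ω, ν(y_1)⟩ < 0; consequently Σ_i sgn⟨ω, ν(y_i)⟩ = 0. -/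
/-!
Along the line, `g s = f (x + s • ω)` is a `C¹` function with `g' s = ⟪ω, ∇f (x + s • ω)⟫`,
whose zeros are exactly the `t i`, all of them simple. Since `E = {f < 0}` is bounded,
`g > 0` outside a bounded set. By the intermediate value theorem `g` has a constant sign on
each gap between consecutive zeros, and at a simple zero the sign of `g'` is the sign of `g`
just to the right and the opposite of the sign just to the left. Hence the signs of `g' (t i)`
alternate, the first one is negative (`g > 0` before `t 0`) and the last one positive
(`g > 0` after the last zero), so `k` is even. The normal `ν` is a positive multiple of `∇f`,
so `⟪ω, ν⟫` has the same signs.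
-/

open Metric Set
open scoped RealInnerProductSpace

/-- The outward unit normal field of the level-set description `{f = 0}` of a `C¹`
boundary: the normalized gradient of the defining function `f`. -/
noncomputable def normalField {n : ℕ} (f : EuclideanSpace ℝ (Fin n) → ℝ)
    (z : EuclideanSpace ℝ (Fin n)) : EuclideanSpace ℝ (Fin n) :=
  ‖gradient f z‖⁻¹ • gradient f z

open Filter Bornology
open scoped Topology

theorem HasDerivAt.nonpos_of_eventually_nonneg_left {g : ℝ → ℝ} {d s : ℝ}
    (hg : HasDerivAt g d s) (hs : g s = 0) (h : ∀ᶠ u in 𝓝[<] s, 0 ≤ g u) : d ≤ 0 := by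
  have hslope : Tendsto (slope g s) (𝓝[<] s) (𝓝 d) :=
    (hasDerivAt_iff_tendsto_slope.1 hg).mono_left (nhdsWithin_mono _ fun _ hu => ne_of_lt hu)
  refine le_of_tendsto hslope ?_
  filter_upwards [h, self_mem_nhdsWithin] with u hu hlt
  rw [slope_def_field, hs, sub_zero]
  exact div_nonpos_of_nonneg_of_nonpos hu (sub_nonpos.2 (le_of_lt hlt))

theorem HasDerivAt.nonneg_of_eventually_nonneg_right {g : ℝ → ℝ} {d s : ℝ}
    (hg : HasDerivAt g d s) (hs : g s = 0) (h : ∀ᶠ u in 𝓝[>] s, 0 ≤ g u) : 0 ≤ d := by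
  have hslope : Tendsto (slope g s) (𝓝[>] s) (𝓝 d) :=
    (hasDerivAt_iff_tendsto_slope.1 hg).mono_left (nhdsWithin_mono _ fun _ hu => ne_of_gt hu)
  refine ge_of_tendsto hslope ?_
  filter_upwards [h, self_mem_nhdsWithin] with u hu hlt
  rw [slope_def_field, hs, sub_zero]
  exact div_nonneg hu (sub_nonneg.2 (le_of_lt hlt))

theorem IsPreconnected.pos_of_ne_zero {α : Type*} [TopologicalSpace α] {S : Set α} {g : α → ℝ}
    (hS : IsPreconnected S) (hg : ContinuousOn g S) (h0 : ∀ u ∈ S, g u ≠ 0) {a : α}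
    (ha : a ∈ S) (hga : 0 < g a) {u : α} (hu : u ∈ S) : 0 < g u := by
  by_contra! hgu
  obtain ⟨v, hv, hv0⟩ := hS.intermediate_value hu ha hg ⟨hgu, hga.le⟩
  exact h0 v hv hv0

section SimpleZeros

variable {g : ℝ → ℝ}

theorem deriv_neg_of_first_zero (hg : Continuous g) {s d : ℝ} (hd : HasDerivAt g d s)
    (hs : g s = 0) (hd0 : d ≠ 0) (hleft : ∀ u ∈ Iio s, g u ≠ 0)
    (hbot : ∀ᶠ u in atBot, 0 < g u) : d < 0 := by
  obtain ⟨a, hga, has⟩ := (hbot.and (eventually_lt_atBot s)).exists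
  refine lt_of_le_of_ne (hd.nonpos_of_eventually_nonneg_left hs ?_) hd0
  filter_upwards [self_mem_nhdsWithin] with u hu
  exact (isPreconnected_Iio.pos_of_ne_zero hg.continuousOn hleft has hga hu).le

theorem deriv_pos_of_last_zero (hg : Continuous g) {s d : ℝ} (hd : HasDerivAt g d s)
    (hs : g s = 0) (hd0 : d ≠ 0) (hright : ∀ u ∈ Ioi s, g u ≠ 0)
    (htop : ∀ᶠ u in atTop, 0 < g u) : 0 < d := by
  obtain ⟨b, hgb, hsb⟩ := (htop.and (eventually_gt_atTop s)).exists
  refine lt_of_le_of_ne (hd.nonneg_of_eventually_nonneg_right hs ?_) hd0.symm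
  filter_upwards [self_mem_nhdsWithin] with u hu
  exact (isPreconnected_Ioi.pos_of_ne_zero hg.continuousOn hright hsb hgb hu).le

theorem deriv_pos_and_neg_of_pos_on_Ioo {a b da db : ℝ} (hab : a < b) (ha : g a = 0)
    (hb : g b = 0) (hda : HasDerivAt g da a) (hdb : HasDerivAt g db b) (hda0 : da ≠ 0)
    (hdb0 : db ≠ 0) (hpos : ∀ u ∈ Ioo a b, 0 < g u) : 0 < da ∧ db < 0 := by
  refine ⟨lt_of_le_of_ne (hda.nonneg_of_eventually_nonneg_right ha ?_) hda0.symm,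
    lt_of_le_of_ne (hdb.nonpos_of_eventually_nonneg_left hb ?_) hdb0⟩
  · filter_upwards [Ioo_mem_nhdsGT hab] with u hu using (hpos u hu).le
  · filter_upwards [Ioo_mem_nhdsLT hab] with u hu using (hpos u hu).le

theorem deriv_neg_iff_pos_of_consecutive_zeros (hg : Continuous g) {a b da db : ℝ}
    (hab : a < b) (ha : g a = 0) (hb : g b = 0) (hda : HasDerivAt g da a)
    (hdb : HasDerivAt g db b) (hda0 : da ≠ 0) (hdb0 : db ≠ 0)
    (hmid : ∀ u ∈ Ioo a b, g u ≠ 0) : da < 0 ↔ 0 < db := by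
  obtain ⟨m, hm⟩ := nonempty_Ioo.2 hab
  rcases (hmid m hm).lt_or_gt with hneg | hpos
  · have hneg' : ∀ u ∈ Ioo a b, 0 < -g u := fun u hu =>
      isPreconnected_Ioo.pos_of_ne_zero hg.neg.continuousOn (fun v hv => neg_ne_zero.2 (hmid v hv))
        hm (neg_pos.2 hneg) hu
    obtain ⟨h1, h2⟩ := deriv_pos_and_neg_of_pos_on_Ioo (g := fun u => -g u) hab (by simp [ha])
      (by simp [hb]) hda.neg hdb.neg (neg_ne_zero.2 hda0) (neg_ne_zero.2 hdb0) hneg'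
    exact iff_of_true (by linarith) (by linarith)
  · obtain ⟨h1, h2⟩ := deriv_pos_and_neg_of_pos_on_Ioo hab ha hb hda hdb hda0 hdb0 fun u hu =>
      isPreconnected_Ioo.pos_of_ne_zero hg.continuousOn hmid hm hpos hu
    exact iff_of_false (by linarith) (by linarith)

variable {k : ℕ} {t d : Fin k → ℝ}

theorem deriv_neg_iff_even (hg : Continuous g) (ht : StrictMono t)
    (hzero : ∀ s, g s = 0 ↔ s ∈ range t) (hd : ∀ i, HasDerivAt g (d i) (t i))
    (hd0 : ∀ i, d i ≠ 0) (hbot : ∀ᶠ u in atBot, 0 < g u) (i : Fin k) :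
    d i < 0 ↔ Even (i : ℕ) := by
  obtain ⟨i, hi⟩ := i
  induction i with
  | zero =>
    refine iff_of_true (deriv_neg_of_first_zero hg (hd _) ((hzero _).2 (mem_range_self _))
      (hd0 _) ?_ hbot) Even.zero
    rintro u hu hgu
    obtain ⟨j, rfl⟩ := (hzero u).1 hgu
    exact (ht.monotone (show (⟨0, hi⟩ : Fin k) ≤ j from Nat.zero_le _)).not_gt hu
  | succ i ih =>
    have hlt : (⟨i, by omega⟩ : Fin k) < ⟨i + 1, hi⟩ := Nat.lt_succ_self i
    have hmid : ∀ u ∈ Ioo (t ⟨i, by omega⟩) (t ⟨i + 1, hi⟩), g u ≠ 0 := by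
      rintro u ⟨hu₁, hu₂⟩ hgu
      obtain ⟨j, rfl⟩ := (hzero u).1 hgu
      have := ht.lt_iff_lt.1 hu₁
      have := ht.lt_iff_lt.1 hu₂
      simp only [Fin.lt_def] at *
      omega
    rw [Nat.even_add_one, ← ih (by omega), deriv_neg_iff_pos_of_consecutive_zeros hg (ht hlt)
      ((hzero _).2 (mem_range_self _)) ((hzero _).2 (mem_range_self _)) (hd _) (hd _)
      (hd0 _) (hd0 _) hmid, not_lt]
    exact (hd0 _).le_iff_lt.symm

theorem even_of_simple_zeros (hg : Continuous g) (ht : StrictMono t)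
    (hzero : ∀ s, g s = 0 ↔ s ∈ range t) (hd : ∀ i, HasDerivAt g (d i) (t i))
    (hd0 : ∀ i, d i ≠ 0) (hbot : ∀ᶠ u in atBot, 0 < g u) (htop : ∀ᶠ u in atTop, 0 < g u) :
    Even k := by
  rcases Nat.eq_zero_or_pos k with rfl | hk
  · exact Even.zero
  set last : Fin k := ⟨k - 1, by omega⟩
  have hlast : 0 < d last := by
    refine deriv_pos_of_last_zero hg (hd last) ((hzero _).2 (mem_range_self _)) (hd0 last) ?_ htop
    rintro u hu hgu
    obtain ⟨j, rfl⟩ := (hzero u).1 hgu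
    exact (ht.monotone (show j ≤ last from Nat.le_sub_one_of_lt j.2)).not_gt hu
  have hodd : ¬Even (k - 1) := fun he =>
    hlast.not_gt ((deriv_neg_iff_even hg ht hzero hd hd0 hbot last).2 he)
  simpa [Nat.sub_add_cancel hk] using Nat.even_add_one.2 hodd

end SimpleZeros

section AlternatingSigns

variable {k : ℕ} {a : Fin k → ℝ}

theorem neg_iff_pos_succ_of_neg_iff_even (ha0 : ∀ i, a i ≠ 0)
    (ha : ∀ i, a i < 0 ↔ Even (i : ℕ)) (i : ℕ) (h : i + 1 < k) :
    a ⟨i, Nat.lt_of_succ_lt h⟩ < 0 ↔ 0 < a ⟨i + 1, h⟩ := by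
  rw [ha, ← not_le, (ha0 ⟨i + 1, h⟩).le_iff_lt, ha, Nat.even_add_one, not_not]

theorem sum_sign_eq_zero_of_neg_iff_even (hk : Even k) (ha0 : ∀ i, a i ≠ 0)
    (ha : ∀ i, a i < 0 ↔ Even (i : ℕ)) : ∑ i, Real.sign (a i) = 0 := by
  have hsign : ∀ i, Real.sign (a i) = -(-1) ^ (i : ℕ) := by
    intro i
    rcases (ha0 i).lt_or_gt with h | h
    · rw [Real.sign_of_neg h, ((ha i).1 h).neg_one_pow]
    · have hodd : Odd (i : ℕ) := Nat.not_even_iff_odd.1 fun he => h.not_gt ((ha i).2 he)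
      rw [Real.sign_of_pos h, hodd.neg_one_pow, neg_neg]
  simp only [hsign, Finset.sum_neg_distrib, Fin.sum_univ_eq_sum_range (fun i => (-1 : ℝ) ^ i),
    neg_one_geom_sum, hk, if_true, neg_zero]

end AlternatingSigns

theorem isBounded_line_preimage {V : Type*} [NormedAddCommGroup V] [NormedSpace ℝ V]
    {S : Set V} (hS : IsBounded S) (x : V) {ω : V} (hω : ω ≠ 0) :
    IsBounded {s : ℝ | x + s • ω ∈ S} := by
  have hline : {s : ℝ | x + s • ω ∈ S} = AffineMap.lineMap x (x + ω) ⁻¹' S := by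
    ext s; simp [AffineMap.lineMap_apply_module', add_comm]
  rw [hline]
  exact (antilipschitzWith_lineMap (𝕜 := ℝ) (by simpa using hω)).isBounded_preimage hS

theorem eventually_pos_along_line {V : Type*} [NormedAddCommGroup V] [NormedSpace ℝ V]
    {f : V → ℝ} (hf : IsBounded {z | f z ≤ 0}) (x : V) {ω : V} (hω : ω ≠ 0) :
    ∀ᶠ s in cobounded ℝ, 0 < f (x + s • ω) := by
  simpa using isBounded_def.1 (isBounded_line_preimage hf x hω)

theorem HasGradientAt.hasDerivAt_line {V : Type*} [NormedAddCommGroup V] [InnerProductSpace ℝ V]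
    [CompleteSpace V] {f : V → ℝ} {f' x ω : V} {s : ℝ} (hf : HasGradientAt f f' (x + s • ω)) :
    HasDerivAt (fun s : ℝ => f (x + s • ω)) ⟪ω, f'⟫ s := by
  have hline : HasDerivAt (fun s : ℝ => x + s • ω) ω s := by
    simpa using ((hasDerivAt_id s).smul_const ω).const_add x
  rw [real_inner_comm]
  exact (hf.hasFDerivAt.comp_hasDerivAt s hline).congr_deriv (by simp)

theorem inner_normalField_neg_iff {n : ℕ} {f : EuclideanSpace ℝ (Fin n) → ℝ}
    {ω z : EuclideanSpace ℝ (Fin n)} :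
    ⟪ω, normalField f z⟫ < 0 ↔ ⟪ω, gradient f z⟫ < 0 := by
  rcases eq_or_ne (gradient f z) 0 with h | h
  · simp [normalField, h]
  · have hc : 0 < ‖gradient f z‖⁻¹ := inv_pos.2 (norm_pos_iff.2 h)
    simp [normalField, real_inner_smul_right, mul_neg_iff, hc, hc.not_gt]

theorem stmt_12_general (n : ℕ) (E : Set (EuclideanSpace ℝ (Fin n)))
    (hbdd : Bornology.IsBounded E)
    (f : EuclideanSpace ℝ (Fin n) → ℝ) (hf : ContDiff ℝ 1 f)
    (hEf : E = {z | f z < 0}) (hfr : frontier E = {z | f z = 0})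
    (x : EuclideanSpace ℝ (Fin n))
    (ω : EuclideanSpace ℝ (Fin n)) (hω : ‖ω‖ = 1)
    (k : ℕ) (t : Fin k → ℝ) (ht : StrictMono t)
    (hinter : {y | y ∈ frontier E ∧ ∃ s : ℝ, y = x + s • ω} =
        Set.range fun i => x + t i • ω)
    (htrans : ∀ y ∈ frontier E, (∃ s : ℝ, y = x + s • ω) →
        ⟪ω, normalField f y⟫ ≠ 0) :
    Even k ∧
      (∀ h : 0 < k, ⟪ω, normalField f (x + t ⟨0, h⟩ • ω)⟫ < 0) ∧
      (∀ (i : ℕ) (h : i + 1 < k),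
        (⟪ω, normalField f (x + t ⟨i, Nat.lt_of_succ_lt h⟩ • ω)⟫ < 0 ↔
          0 < ⟪ω, normalField f (x + t ⟨i + 1, h⟩ • ω)⟫)) ∧
      ∑ i, Real.sign ⟪ω, normalField f (x + t i • ω)⟫ = 0 := by
  have hω0 : ω ≠ 0 := norm_ne_zero_iff.1 (by rw [hω]; exact one_ne_zero)
  set g : ℝ → ℝ := fun s => f (x + s • ω)
  have hg : Continuous g := hf.continuous.comp (by fun_prop)
  have hderiv : ∀ s, HasDerivAt g ⟪ω, gradient f (x + s • ω)⟫ s := fun s =>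
    ((hf.differentiable one_ne_zero) _).hasGradientAt.hasDerivAt_line
  have hzero : ∀ s, g s = 0 ↔ s ∈ range t := by
    intro s
    simpa [g, hfr, (smul_left_injective ℝ hω0).eq_iff, eq_comm (a := s)] using
      congrArg (x + s • ω ∈ ·) hinter
  have hfront : ∀ i, x + t i • ω ∈ frontier E := fun i => by
    rw [hfr]; exact (hzero _).2 (mem_range_self i)
  have hnonpos : IsBounded {z | f z ≤ 0} := hbdd.closure.subset fun z hz =>
    hz.lt_or_eq.elim (fun h => subset_closure (hEf ▸ h))
      (fun h => frontier_subset_closure (hfr ▸ h))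
  have hpos : ∀ᶠ s in cobounded ℝ, 0 < g s := eventually_pos_along_line hnonpos x hω0
  have hgrad0 : ∀ i, ⟪ω, gradient f (x + t i • ω)⟫ ≠ 0 := fun i h0 =>
    htrans _ (hfront i) ⟨t i, rfl⟩ (by rw [normalField, real_inner_smul_right, h0, mul_zero])
  have hbot := hpos.filter_mono IsOrderBornology.atBot_le_cobounded
  have hν : ∀ i : Fin k, ⟪ω, normalField f (x + t i • ω)⟫ < 0 ↔ Even (i : ℕ) := fun i =>
    inner_normalField_neg_iff.trans
      (deriv_neg_iff_even hg ht hzero (fun i => hderiv (t i)) hgrad0 hbot i)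
  have hν0 : ∀ i : Fin k, ⟪ω, normalField f (x + t i • ω)⟫ ≠ 0 := fun i =>
    htrans _ (hfront i) ⟨t i, rfl⟩
  have hk : Even k := even_of_simple_zeros hg ht hzero (fun i => hderiv (t i)) hgrad0 hbot
    (hpos.filter_mono IsOrderBornology.atTop_le_cobounded)
  exact ⟨hk, fun h => (hν _).2 Even.zero, neg_iff_pos_succ_of_neg_iff_even hν0 hν,
    sum_sign_eq_zero_of_neg_iff_even hk hν0 hν⟩

/-- Let `E ⊂ ℝⁿ` be a bounded open set with `C¹` boundary (described by a
`C¹` defining function `f` with nonvanishing gradient on `∂E = {f = 0}`, `E = {f < 0}`),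
with outward unit normal `ν = ∇f/‖∇f‖`.  Let `x ∈ ∂E` and `ω ∈ S^{n-1}` be such that the
line `L_{x,ω}` meets `∂E` transversally in finitely many points `y_1, ..., y_k`,
enumerated along the line as `y_i = x + t_i ω` with `t` strictly increasing.  Then `k` is
even, `⟪ω, ν y_1⟫ < 0`, the signs of `⟪ω, ν y_i⟫` alternate, and
`Σ_i sgn ⟪ω, ν y_i⟫ = 0`. -/
theorem stmt_12 (n : ℕ) (E : Set (EuclideanSpace ℝ (Fin n)))
    (hopen : IsOpen E) (hbdd : Bornology.IsBounded E)
    (f : EuclideanSpace ℝ (Fin n) → ℝ) (hf : ContDiff ℝ 1 f)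
    (hEf : E = {z | f z < 0}) (hfr : frontier E = {z | f z = 0})
    (hgrad : ∀ z ∈ frontier E, gradient f z ≠ 0)
    (x : EuclideanSpace ℝ (Fin n)) (hx : x ∈ frontier E)
    (ω : EuclideanSpace ℝ (Fin n)) (hω : ‖ω‖ = 1)
    (k : ℕ) (t : Fin k → ℝ) (ht : StrictMono t)
    (hinter : {y | y ∈ frontier E ∧ ∃ s : ℝ, y = x + s • ω} =
        Set.range fun i => x + t i • ω)
    (htrans : ∀ y ∈ frontier E, (∃ s : ℝ, y = x + s • ω) →
        ⟪ω, normalField f y⟫ ≠ 0) :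
    Even k ∧
      (∀ h : 0 < k, ⟪ω, normalField f (x + t ⟨0, h⟩ • ω)⟫ < 0) ∧
      (∀ (i : ℕ) (h : i + 1 < k),
        (⟪ω, normalField f (x + t ⟨i, Nat.lt_of_succ_lt h⟩ • ω)⟫ < 0 ↔
          0 < ⟪ω, normalField f (x + t ⟨i + 1, h⟩ • ω)⟫)) ∧
      ∑ i, Real.sign ⟪ω, normalField f (x + t i • ω)⟫ = 0 :=
  stmt_12_general n E hbdd f hf hEf hfr x ω hω k t ht hinter htrans
end
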